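/- arXiv:2308.01242 — 3 statements merged into one kernel-verified Lean document; each statement's English description precedes it below -/
import Mathlib

section
/- A signed graph (G, σ) with no positive loop admits a balanced k-coloring if and only if the signed graph (G, -σ) admits a 0-free k-coloring. -/
/-- A signed (multi)graph: an edge set with endpoints (an unordered pair,
possibly a loop) and a sign for each edge (`neg e = true` means `e` is negative). -/
structure SGraph (V : Type) where
  E : Type
  ends : E → Sym2 V
  neg : E → Bool

namespace SGraph

variable {V W : Type}

/-- Walks in a signed multigraph, recorded as sequences of edges. -/
inductive Walk (G : SGraph V) : V → V → Type where
  | nil {v : V} : Walk G v v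
  | cons {u v w : V} (e : G.E) (h : G.ends e = s(u, v)) (p : Walk G v w) : Walk G u w

namespace Walk

variable {G : SGraph V}

/-- The list of edges of a walk. -/
def edges : {u v : V} → G.Walk u v → List G.E
  | _, _, .nil => []
  | _, _, .cons e _ p => e :: p.edges

/-- The list of vertices visited by a walk (in order, with repetitions). -/
def support : {u v : V} → G.Walk u v → List V
  | u, _, .nil => [u]
  | u, _, .cons _ _ p => u :: p.support

/-- A walk is negative if it uses an odd number of negative edges
(its sign, the product of the signs of its edges with multiplicity, is `-1`). -/
def isNeg {u v : V} (p : G.Walk u v) : Bool :=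
  (p.edges.map G.neg).foldr Bool.xor false

/-- A closed walk is a cycle if it has at least one edge, no repeated edge,
and no repeated vertex (except the initial vertex which is also final). -/
def IsCycle {v : V} (p : G.Walk v v) : Prop :=
  p.edges ≠ [] ∧ p.edges.Nodup ∧ p.support.tail.Nodup

/-- The internal vertices of a walk. -/
def inner {u v : V} (p : G.Walk u v) : List V :=
  p.support.tail.dropLast

end Walk

/-- A set of vertices is balanced if it induces no negative cycle. -/
def BalancedSet (G : SGraph V) (X : Set V) : Prop :=
  ∀ (v : V) (p : G.Walk v v), p.IsCycle → (∀ u ∈ p.support, u ∈ X) → p.isNeg = false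

/-- A signed graph is balanced if it contains no negative cycle. -/
def IsBalanced (G : SGraph V) : Prop := G.BalancedSet Set.univ

/-- The signed graph has a negative loop. -/
def HasNegLoop (G : SGraph V) : Prop :=
  ∃ e : G.E, (∃ v : V, G.ends e = s(v, v)) ∧ G.neg e = true

/-- The signed graph has a positive loop. -/
def HasPosLoop (G : SGraph V) : Prop :=
  ∃ e : G.E, (∃ v : V, G.ends e = s(v, v)) ∧ G.neg e = false

/-- A balanced `k`-coloring: a partition of the vertices into `k` balanced color classes. -/
def ColorableB (G : SGraph V) (k : ℕ) : Prop :=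
  ∃ c : V → Fin k, ∀ i : Fin k, G.BalancedSet {v | c v = i}

/-- The balanced chromatic number. -/
noncomputable def chromNumB (G : SGraph V) : ℕ∞ :=
  ⨅ n ∈ {n : ℕ | G.ColorableB n}, (n : ℕ∞)

/-- Switching at the set of vertices where `s` is `true`: the sign of an edge is
multiplied by `-1` once for each of its endpoints (with multiplicity) in the set;
thus an edge with exactly one endpoint in the set changes sign, and loops are unchanged. -/
def switch (G : SGraph V) (s : V → Bool) : SGraph V where
  E := G.E
  ends := G.ends
  neg e := Bool.xor (G.neg e)
    (Sym2.lift ⟨fun u v => Bool.xor (s u) (s v), fun u v => Bool.xor_comm _ _⟩ (G.ends e))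

/-- The negation of a signature. -/
def negate (G : SGraph V) : SGraph V where
  E := G.E
  ends := G.ends
  neg e := !(G.neg e)

/-- A set of vertices is connected via positive edges inside itself. -/
def PosConnected (G : SGraph V) (B : Set V) : Prop :=
  B.Nonempty ∧ ∀ u ∈ B, ∀ v ∈ B, ∃ p : G.Walk u v,
    (∀ x ∈ p.support, x ∈ B) ∧ ∀ e ∈ p.edges, G.neg e = false

/-- `H` is a minor of `G`: after a suitable switching of `G`, there are disjoint
branch sets (each connected via positive edges) for the vertices of `H`, and
distinct edges of `G`, with the correct signs, realizing the edges of `H`. -/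
def IsMinor (H : SGraph W) (G : SGraph V) : Prop :=
  ∃ s : V → Bool, ∃ B : W → Set V,
    (∀ x : W, (G.switch s).PosConnected (B x)) ∧
    (Pairwise fun x y => Disjoint (B x) (B y)) ∧
    ∃ η : H.E → G.E, Function.Injective η ∧
      ∀ (e : H.E) (x y : W), H.ends e = s(x, y) →
        (G.switch s).neg (η e) = H.neg e ∧
        ∃ u v : V, G.ends (η e) = s(u, v) ∧ u ∈ B x ∧ v ∈ B y

/-- A homomorphism of signed graphs: after a suitable switching of the source,
a map of vertices and edges preserving incidences and signs. -/
def HomTo (G : SGraph V) (H : SGraph W) : Prop :=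
  ∃ s : V → Bool, ∃ f : V → W, ∃ g : G.E → H.E,
    ∀ (e : G.E) (u v : V), G.ends e = s(u, v) →
      H.ends (g e) = s(f u, f v) ∧ H.neg (g e) = (G.switch s).neg e

/-- A subdivision of `H` is isomorphic to a subgraph of `G` (signs ignored):
an injection of the vertices of `H` together with internally disjoint,
edge-disjoint paths of `G` realizing the edges of `H`. -/
def IsSubdivisionOf (H : SGraph W) (G : SGraph V) : Prop :=
  ∃ (φ : W → V) (ep : H.E → W × W),
    Function.Injective φ ∧
    (∀ e : H.E, H.ends e = s((ep e).1, (ep e).2)) ∧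
    ∃ P : (e : H.E) → G.Walk (φ (ep e).1) (φ (ep e).2),
      (∀ e, (P e).support.Nodup) ∧
      (∀ e f, e ≠ f → ∀ x ∈ (P e).inner, x ∉ (P f).support) ∧
      (∀ e, ∀ x ∈ (P e).inner, x ∉ Set.range φ) ∧
      (∀ e f, e ≠ f → ∀ g ∈ (P e).edges, g ∉ (P f).edges)

/-- `H` is a total topological minor of `G`: a subdivision of `H` occurs as a
subgraph of `G` in which the path representing each edge `e` of `H` has sign
exactly the sign of `e`. -/
def IsTotalTopMinor (H : SGraph W) (G : SGraph V) : Prop :=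
  ∃ (φ : W → V) (ep : H.E → W × W),
    Function.Injective φ ∧
    (∀ e : H.E, H.ends e = s((ep e).1, (ep e).2)) ∧
    ∃ P : (e : H.E) → G.Walk (φ (ep e).1) (φ (ep e).2),
      (∀ e, (P e).support.Nodup) ∧
      (∀ e f, e ≠ f → ∀ x ∈ (P e).inner, x ∉ (P f).support) ∧
      (∀ e, ∀ x ∈ (P e).inner, x ∉ Set.range φ) ∧
      (∀ e f, e ≠ f → ∀ g ∈ (P e).edges, g ∉ (P f).edges) ∧
      (∀ e, (P e).isNeg = H.neg e)

/-- `H` is a topological minor of `G`: some subdivision of `H` occurs as a subgraph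
of `G` in which every cycle of `H` keeps its sign; equivalently, after a suitable
switching of `H`, `H` is a total topological minor of `G`. -/
def IsTopMinor (H : SGraph W) (G : SGraph V) : Prop :=
  ∃ s : W → Bool, (H.switch s).IsTotalTopMinor G

end SGraph

open SGraph

/-- The signed graph `G̃` obtained from a graph `G` by replacing each edge by a
pair of parallel edges, one positive and one negative. -/
def SimpleGraph.tildeS {V : Type} (G : SimpleGraph V) : SGraph V where
  E := G.edgeSet × Bool
  ends e := (e.1 : Sym2 V)
  neg e := e.2

/-- The all-negative signed graph `(G, -)` on a graph `G`. -/
def SimpleGraph.allNeg {V : Type} (G : SimpleGraph V) : SGraph V where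
  E := G.edgeSet
  ends e := (e : Sym2 V)
  neg _ := true

/-- `K̃_k`: the signed graph on `k` vertices with a positive and a negative edge
between each pair of distinct vertices. -/
def tildeK (k : ℕ) : SGraph (Fin k) := (⊤ : SimpleGraph (Fin k)).tildeS

/-- `(K_k, -)`: the all-negative complete signed graph on `k` vertices. -/
def allNegK (k : ℕ) : SGraph (Fin k) := (⊤ : SimpleGraph (Fin k)).allNeg

/-- `K̃_k⁺`: as `K̃_k`, with in addition a positive loop at every vertex. -/
def tildeKplus (k : ℕ) : SGraph (Fin k) where
  E := ((⊤ : SimpleGraph (Fin k)).edgeSet × Bool) ⊕ Fin k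
  ends := Sum.elim (fun e => (e.1 : Sym2 (Fin k))) (fun i => s(i, i))
  neg := Sum.elim (fun e => e.2) (fun _ => false)

/-- `G` has a `K_k`-minor: `k` disjoint connected branch sets, pairwise joined by an edge. -/
def SimpleGraph.HasCliqueMinor {V : Type} (G : SimpleGraph V) (k : ℕ) : Prop :=
  ∃ T : Fin k → G.Subgraph,
    (∀ i, (T i).coe.Connected) ∧
    (Pairwise fun i j => Disjoint (T i).verts (T j).verts) ∧
    ∀ i j, i ≠ j → ∃ u v, G.Adj u v ∧ u ∈ (T i).verts ∧ v ∈ (T j).verts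

/-- `G` has an odd-`K_k`-minor: a 2-coloring of the vertices together with `k`
disjoint trees, all of whose edges are properly colored, pairwise joined by a
monochromatic edge. -/
def SimpleGraph.HasOddCliqueMinor {V : Type} (G : SimpleGraph V) (k : ℕ) : Prop :=
  ∃ c : V → Bool, ∃ T : Fin k → G.Subgraph,
    (∀ i, (T i).coe.IsTree) ∧
    (Pairwise fun i j => Disjoint (T i).verts (T j).verts) ∧
    (∀ i, ∀ u v, (T i).Adj u v → c u ≠ c v) ∧
    ∀ i j, i ≠ j →
      ∃ u v, G.Adj u v ∧ u ∈ (T i).verts ∧ v ∈ (T j).verts ∧ c u = c v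

/-- `G` has an even-odd-`K_k`-minor: as an odd-`K_k`-minor, with in addition a
properly colored edge between each pair of distinct trees. -/
def SimpleGraph.HasEvenOddCliqueMinor {V : Type} (G : SimpleGraph V) (k : ℕ) : Prop :=
  ∃ c : V → Bool, ∃ T : Fin k → G.Subgraph,
    (∀ i, (T i).coe.IsTree) ∧
    (Pairwise fun i j => Disjoint (T i).verts (T j).verts) ∧
    (∀ i, ∀ u v, (T i).Adj u v → c u ≠ c v) ∧
    ∀ i j, i ≠ j →
      (∃ u v, G.Adj u v ∧ u ∈ (T i).verts ∧ v ∈ (T j).verts ∧ c u = c v) ∧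
      (∃ u v, G.Adj u v ∧ u ∈ (T i).verts ∧ v ∈ (T j).verts ∧ c u ≠ c v)

/-- The fractional chromatic number of a finite graph: the infimum total weight of
a system of nonnegative weights on independent sets covering every vertex with
total weight at least 1. -/
noncomputable def SimpleGraph.fracChrom {V : Type} [Fintype V] [DecidableEq V]
    (G : SimpleGraph V) : ℝ :=
  sInf {r : ℝ | ∃ w : Finset V → ℝ, (∀ A, 0 ≤ w A) ∧
    (∀ A : Finset V, w A ≠ 0 → (∀ u ∈ A, ∀ v ∈ A, ¬G.Adj u v)) ∧
    (∀ v : V, 1 ≤ ∑ A : Finset V, if v ∈ A then w A else 0) ∧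
    ∑ A : Finset V, w A ≤ r}

/-- The fractional balanced chromatic number of a finite signed graph: the infimum
total weight of a system of nonnegative weights on balanced sets covering every
vertex with total weight at least 1. -/
noncomputable def SGraph.fracChromB {V : Type} [Fintype V] [DecidableEq V]
    (G : SGraph V) : ℝ :=
  sInf {r : ℝ | ∃ w : Finset V → ℝ, (∀ A, 0 ≤ w A) ∧
    (∀ A : Finset V, w A ≠ 0 → G.BalancedSet ↑A) ∧
    (∀ v : V, 1 ≤ ∑ A : Finset V, if v ∈ A then w A else 0) ∧
    ∑ A : Finset V, w A ≤ r}

/-- A 0-free `k`-coloring: values from `{±1, …, ±k}` with `ψ u ≠ σ(e)·ψ v` on each edge. -/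
def SGraph.ZeroFreeColorable {V : Type} (G : SGraph V) (k : ℕ) : Prop :=
  ∃ ψ : V → ℤ, (∀ v : V, 1 ≤ |ψ v| ∧ |ψ v| ≤ (k : ℤ)) ∧
    ∀ (e : G.E) (u v : V), G.ends e = s(u, v) →
      ψ u ≠ (if G.neg e then -1 else 1) * ψ v

/-!
A set of vertices is balanced iff some switching makes every edge inside it positive. So a
balanced `k`-coloring `c`, together with such switchings `sᵢ` of its classes, is the same
thing as the 0-free `k`-coloring `v ↦ ±(c v + 1)` of `(G, -σ)` with sign `s_{c v} v`: on an
edge inside a class the switched sign is positive, which says exactly `ψ u ≠ -σ(e) ψ v`, and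
across classes the absolute values differ.
-/

theorem abs_signed_mul (b : Bool) (m : ℤ) : |(if b then -1 else 1) * m| = |m| := by
  cases b <;> simp

theorem eq_signed_mul_abs (x : ℤ) : x = (if decide (x < 0) then -1 else 1) * |x| := by
  rcases lt_or_ge x 0 with h | h <;> simp [h, abs_of_neg, abs_of_nonneg]

theorem signed_mul_ne_signed_mul_iff {a b n : Bool} {m m' : ℤ} (hm : 0 < m) (hm' : 0 < m') :
    (if a then -1 else 1) * m ≠ (if !n then -1 else 1) * ((if b then -1 else 1) * m') ↔
      m ≠ m' ∨ xor n (xor a b) = false := by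
  cases a <;> cases b <;> cases n <;> simp <;> omega

namespace SGraph

variable {V : Type} {G : SGraph V}

theorem negate_neg (e : G.E) : G.negate.neg e = !G.neg e := rfl

theorem switch_neg_of_ends {s : V → Bool} {e : G.E} {u v : V} (h : G.ends e = s(u, v)) :
    (G.switch s).neg e = xor (G.neg e) (xor (s u) (s v)) := by
  simp [switch, h]

namespace Walk

def append : {u v w : V} → G.Walk u v → G.Walk v w → G.Walk u w
  | _, _, _, .nil, q => q
  | _, _, _, .cons e h p, q => .cons e h (p.append q)

def reverse : {u v : V} → G.Walk u v → G.Walk v u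
  | _, _, .nil => .nil
  | _, _, .cons e h p => p.reverse.append (.cons e (by rw [h, Sym2.eq_swap]) .nil)

theorem edges_append {u v w : V} (p : G.Walk u v) (q : G.Walk v w) :
    (p.append q).edges = p.edges ++ q.edges := by
  induction p with
  | nil => rfl
  | cons e h p ih => simp [append, edges, ih]

theorem start_mem_support {u v : V} (p : G.Walk u v) : u ∈ p.support := by
  cases p <;> exact List.mem_cons_self

theorem end_mem_support {u v : V} (p : G.Walk u v) : v ∈ p.support := by
  induction p with
  | nil => exact List.mem_cons_self
  | cons e h p ih => exact List.mem_cons_of_mem _ ih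

theorem mem_support_append_iff {u v w x : V} (p : G.Walk u v) (q : G.Walk v w) :
    x ∈ (p.append q).support ↔ x ∈ p.support ∨ x ∈ q.support := by
  induction p with
  | nil =>
    simp only [append, support, List.mem_singleton, iff_or_self]
    rintro rfl
    exact q.start_mem_support
  | cons e h p ih => simp only [append, support, List.mem_cons, ih, or_assoc]

theorem mem_support_reverse_iff {u v x : V} (p : G.Walk u v) :
    x ∈ p.reverse.support ↔ x ∈ p.support := by
  induction p with
  | nil => rfl
  | @cons _ y _ e h p ih =>
    have hstart : x = y → x ∈ p.support := by rintro rfl; exact p.start_mem_support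
    simp only [reverse, mem_support_append_iff, ih, support, List.mem_cons, List.not_mem_nil,
      or_false]
    tauto

theorem isNeg_cons {u x v : V} (e : G.E) (h : G.ends e = s(u, x)) (p : G.Walk x v) :
    (Walk.cons e h p).isNeg = xor (G.neg e) p.isNeg := rfl

theorem isNeg_append {u v w : V} (p : G.Walk u v) (q : G.Walk v w) :
    (p.append q).isNeg = xor p.isNeg q.isNeg := by
  induction p with
  | nil => simp [append, isNeg, edges]
  | cons e h p ih => simp only [append, isNeg_cons, ih, Bool.xor_assoc]

theorem isNeg_reverse {u v : V} (p : G.Walk u v) : p.reverse.isNeg = p.isNeg := by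
  induction p with
  | nil => rfl
  | cons e h p ih =>
    simp only [reverse, isNeg_append, isNeg_cons, ih]
    simp [isNeg, edges, Bool.xor_comm]

theorem isNeg_eq_false_of_edges_eq_nil {u v : V} {p : G.Walk u v} (h : p.edges = []) :
    p.isNeg = false := by
  simp [isNeg, h]

theorem mem_support_of_mem_edges {u v a b : V} {p : G.Walk u v} {e : G.E}
    (he : e ∈ p.edges) (hab : G.ends e = s(a, b)) : a ∈ p.support ∧ b ∈ p.support := by
  induction p with
  | nil => simp [edges] at he
  | cons e' h' p ih =>
    rcases List.mem_cons.mp he with rfl | he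
    · rw [h', Sym2.eq_iff] at hab
      rcases hab with ⟨rfl, rfl⟩ | ⟨rfl, rfl⟩
      · exact ⟨List.mem_cons_self, List.mem_cons_of_mem _ p.start_mem_support⟩
      · exact ⟨List.mem_cons_of_mem _ p.start_mem_support, List.mem_cons_self⟩
    · exact (ih he).imp (List.mem_cons_of_mem _) (List.mem_cons_of_mem _)

theorem edges_nodup_of_support_nodup {u v : V} {p : G.Walk u v} (h : p.support.Nodup) :
    p.edges.Nodup := by
  induction p with
  | nil => exact List.nodup_nil
  | cons e h' p ih =>
    rw [support, List.nodup_cons] at h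
    exact List.nodup_cons.mpr ⟨fun he => h.1 (mem_support_of_mem_edges he h').1, ih h.2⟩

theorem edges_eq_nil_of_support_nodup {u : V} {p : G.Walk u u} (h : p.support.Nodup) :
    p.edges = [] := by
  cases p with
  | nil => rfl
  | cons e h' p => exact absurd p.end_mem_support (List.nodup_cons.mp h).1

theorem edges_eq_singleton_of_support_nodup {u v : V} {p : G.Walk u v} (hp : p.support.Nodup)
    {e : G.E} (he : e ∈ p.edges) (huv : G.ends e = s(u, v)) : p.edges = [e] := by
  cases p with
  | nil => simp [edges] at he
  | cons e' h' p =>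
    rename_i x
    rw [support, List.nodup_cons] at hp
    rcases List.mem_cons.mp he with rfl | he
    · have hxv : x = v := by
        rw [h', Sym2.eq_iff] at huv
        rcases huv with ⟨-, rfl⟩ | ⟨rfl, rfl⟩
        · rfl
        · exact absurd p.end_mem_support hp.1
      subst hxv
      simp [edges, edges_eq_nil_of_support_nodup hp.2]
    · exact absurd (mem_support_of_mem_edges he huv).1 hp.1

theorem isNeg_eq_false_of_tail_nodup {v : V} {p : G.Walk v v} (htail : p.support.tail.Nodup)
    (hedges : ¬ p.edges.Nodup) : p.isNeg = false := by
  cases p with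
  | nil => exact absurd List.nodup_nil hedges
  | cons e h p =>
    have hp : p.support.Nodup := htail
    have he : e ∈ p.edges := by
      by_contra he
      exact hedges (List.nodup_cons.mpr ⟨he, edges_nodup_of_support_nodup hp⟩)
    have hpe := edges_eq_singleton_of_support_nodup hp he (by rw [h, Sym2.eq_swap])
    simp [isNeg, edges, hpe]

theorem exists_eq_append_of_mem_support {u v w : V} (p : G.Walk u v) (hw : w ∈ p.support) :
    ∃ (q : G.Walk u w) (r : G.Walk w v), p = q.append r := by
  induction p with
  | nil =>
    rw [support, List.mem_singleton] at hw
    subst hw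
    exact ⟨.nil, .nil, rfl⟩
  | cons e h p ih =>
    rcases List.mem_cons.mp hw with rfl | hw
    · exact ⟨.nil, .cons e h p, rfl⟩
    · obtain ⟨q, r, rfl⟩ := ih hw
      exact ⟨.cons e h q, r, rfl⟩

theorem exists_eq_append_closed_of_not_nodup {u v : V} (p : G.Walk u v)
    (hp : ¬ p.support.Nodup) : ∃ (w : V) (a : G.Walk u w) (c : G.Walk w w) (b : G.Walk w v),
      c.edges ≠ [] ∧ p = a.append (c.append b) := by
  induction p with
  | nil => exact absurd (List.nodup_singleton _) hp
  | cons e h p ih =>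
    rw [support, List.nodup_cons, not_and_or, not_not] at hp
    rcases hp with hu | hp
    · obtain ⟨q, r, rfl⟩ := p.exists_eq_append_of_mem_support hu
      exact ⟨_, .nil, .cons e h q, r, List.cons_ne_nil _ _, rfl⟩
    · obtain ⟨w, a, c, b, hc, rfl⟩ := ih hp
      exact ⟨w, .cons e h a, c, b, hc, rfl⟩

theorem exists_eq_append_closed_of_not_nodup_tail {u v : V} (p : G.Walk u v)
    (hp : ¬ p.support.tail.Nodup) : ∃ (w : V) (a : G.Walk u w) (c : G.Walk w w) (b : G.Walk w v),
      a.edges ≠ [] ∧ c.edges ≠ [] ∧ p = a.append (c.append b) := by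
  cases p with
  | nil => exact absurd List.nodup_nil hp
  | cons e h p =>
    obtain ⟨w, a, c, b, hc, rfl⟩ := p.exists_eq_append_closed_of_not_nodup hp
    exact ⟨w, .cons e h a, c, b, List.cons_ne_nil _ _, hc, rfl⟩

end Walk

namespace BalancedSet

variable {X : Set V}

/-- Shortest negative closed walks in `X` are cycles: a repeated vertex splits a closed walk
into two shorter ones, and a closed walk without one that is not a cycle goes back and forth
along a single edge. -/
theorem isNeg_eq_false (hX : G.BalancedSet X) {v : V} (p : G.Walk v v)
    (hpX : ∀ x ∈ p.support, x ∈ X) : p.isNeg = false := by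
  induction hn : p.edges.length using Nat.strong_induction_on generalizing v with
  | _ n ih =>
    by_cases hnil : p.edges = []
    · exact Walk.isNeg_eq_false_of_edges_eq_nil hnil
    by_cases htail : p.support.tail.Nodup
    · by_cases hedges : p.edges.Nodup
      · exact hX v p ⟨hnil, hedges, htail⟩ hpX
      · exact Walk.isNeg_eq_false_of_tail_nodup htail hedges
    obtain ⟨w, a, c, b, ha, hc, rfl⟩ := p.exists_eq_append_closed_of_not_nodup_tail htail
    have hmem : ∀ x, x ∈ (a.append (c.append b)).support ↔
        x ∈ a.support ∨ x ∈ c.support ∨ x ∈ b.support := by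
      simp only [Walk.mem_support_append_iff, implies_true]
    simp only [Walk.edges_append, List.length_append] at hn
    have := List.length_pos_of_ne_nil ha
    have := List.length_pos_of_ne_nil hc
    have hc_neg : c.isNeg = false :=
      ih _ (by omega) c (fun x hx => hpX x ((hmem x).2 (.inr (.inl hx)))) rfl
    have hab_neg : (a.append b).isNeg = false := by
      refine ih _ ?_ _ (fun x hx => hpX x ((hmem x).2 ?_)) rfl
      · simp only [Walk.edges_append, List.length_append]
        omega
      · rcases (a.mem_support_append_iff b).1 hx with hx | hx <;> simp [hx]
    rw [Walk.isNeg_append] at hab_neg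
    rw [Walk.isNeg_append, Walk.isNeg_append, Bool.xor_left_comm, hc_neg, hab_neg, Bool.false_xor]

theorem isNeg_eq_isNeg (hX : G.BalancedSet X) {u v : V} (p q : G.Walk u v)
    (hpX : ∀ x ∈ p.support, x ∈ X) (hqX : ∀ x ∈ q.support, x ∈ X) :
    p.isNeg = q.isNeg := by
  have h := hX.isNeg_eq_false (p.append q.reverse) fun x hx => by
    rcases (p.mem_support_append_iff _).1 hx with hx | hx
    · exact hpX x hx
    · exact hqX x ((q.mem_support_reverse_iff).1 hx)
  rw [Walk.isNeg_append, Walk.isNeg_reverse] at h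
  simpa using h

end BalancedSet

def PositiveOn (G : SGraph V) (X : Set V) : Prop :=
  ∀ (e : G.E) (u v : V), G.ends e = s(u, v) → u ∈ X → v ∈ X → G.neg e = false

def ReachableIn (G : SGraph V) (X : Set V) (u v : V) : Prop :=
  ∃ p : G.Walk u v, ∀ x ∈ p.support, x ∈ X

namespace ReachableIn

variable {X : Set V}

theorem refl {v : V} (hv : v ∈ X) : G.ReachableIn X v v :=
  ⟨.nil, fun _ hx => (List.mem_singleton.mp hx) ▸ hv⟩

theorem symm {u v : V} (h : G.ReachableIn X u v) : G.ReachableIn X v u :=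
  let ⟨p, hp⟩ := h
  ⟨p.reverse, fun x hx => hp x (p.mem_support_reverse_iff.mp hx)⟩

theorem trans {u v w : V} (h₁ : G.ReachableIn X u v) (h₂ : G.ReachableIn X v w) :
    G.ReachableIn X u w :=
  let ⟨p, hp⟩ := h₁
  let ⟨q, hq⟩ := h₂
  ⟨p.append q, fun x hx => ((p.mem_support_append_iff q).mp hx).elim (hp x) (hq x)⟩

theorem of_ends {e : G.E} {u v : V} (h : G.ends e = s(u, v)) (hu : u ∈ X) (hv : v ∈ X) :
    G.ReachableIn X u v :=
  ⟨.cons e h .nil, by simp [Walk.support, hu, hv]⟩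

end ReachableIn

theorem BalancedSet.exists_switch {X : Set V} (hX : G.BalancedSet X) :
    ∃ s : V → Bool, (G.switch s).PositiveOn X := by
  rcases isEmpty_or_nonempty V with hV | hV
  · exact ⟨isEmptyElim, fun _ u => isEmptyElim u⟩
  -- switch at the vertices reached from a root of their component by a negative walk in `X`
  let root (v : V) : V := Classical.epsilon fun r => G.ReachableIn X r v
  have hroot : ∀ v ∈ X, G.ReachableIn X (root v) v := fun v hv =>
    Classical.epsilon_spec (p := fun r => G.ReachableIn X r v) ⟨v, ReachableIn.refl hv⟩
  have hsign : ∀ v, ∃ b : Bool, ∀ r (p : G.Walk r v), r = root v →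
      (∀ x ∈ p.support, x ∈ X) → p.isNeg = b := by
    intro v
    by_cases hv : v ∈ X
    · obtain ⟨p₀, hp₀⟩ := hroot v hv
      exact ⟨p₀.isNeg, fun r p hr hp => by subst hr; exact hX.isNeg_eq_isNeg p p₀ hp hp₀⟩
    · exact ⟨false, fun r p _ hp => absurd (hp v p.end_mem_support) hv⟩
  choose s hs using hsign
  refine ⟨s, fun (e : G.E) u v (h : G.ends e = s(u, v)) hu hv => ?_⟩
  have huv := ReachableIn.of_ends h hu hv
  have hroot_eq : root u = root v := congrArg Classical.epsilon <| funext fun r =>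
    propext ⟨fun hr => hr.trans huv, fun hr => hr.trans huv.symm⟩
  obtain ⟨p, hp⟩ := hroot u hu
  have hsu := hs u _ p rfl hp
  have hsv := hs v _ (p.append (.cons e h .nil)) hroot_eq fun x hx => by
    rcases (p.mem_support_append_iff _).mp hx with hx | hx
    · exact hp x hx
    · rcases List.mem_pair.mp hx with rfl | rfl <;> assumption
  rw [switch_neg_of_ends h, ← hsu, ← hsv, Walk.isNeg_append, Walk.isNeg_cons]
  cases p.isNeg <;> cases G.neg e <;> rfl

theorem Walk.isNeg_eq_xor_of_switch {X : Set V} {s : V → Bool}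
    (hs : (G.switch s).PositiveOn X)
    {u v : V} (p : G.Walk u v) (hpX : ∀ x ∈ p.support, x ∈ X) :
    p.isNeg = xor (s u) (s v) := by
  induction p with
  | nil => simp [isNeg, edges]
  | @cons u x v e h p ih =>
    have he := hs e u x h (hpX u List.mem_cons_self)
      (hpX x (List.mem_cons_of_mem _ p.start_mem_support))
    rw [switch_neg_of_ends h] at he
    rw [isNeg_cons, ih fun y hy => hpX y (List.mem_cons_of_mem _ hy)]
    revert he
    cases G.neg e <;> cases s u <;> cases s x <;> cases s v <;> decide

theorem balancedSet_iff_exists_switch {X : Set V} :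
    G.BalancedSet X ↔ ∃ s : V → Bool, (G.switch s).PositiveOn X :=
  ⟨BalancedSet.exists_switch, fun ⟨s, hs⟩ v p _ hpX => by
    rw [p.isNeg_eq_xor_of_switch hs hpX, Bool.xor_self]⟩

theorem ColorableB.zeroFreeColorable_negate {k : ℕ} (hG : G.ColorableB k) :
    G.negate.ZeroFreeColorable k := by
  obtain ⟨c, hc⟩ := hG
  choose s hs using fun i => balancedSet_iff_exists_switch.mp (hc i)
  refine ⟨fun v => (if s (c v) v then -1 else 1) * (((c v : ℕ) : ℤ) + 1), fun v => ?_,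
    fun (e : G.E) u v (h : G.ends e = s(u, v)) => ?_⟩
  · rw [abs_signed_mul, abs_of_pos (by positivity)]
    have := (c v).isLt
    omega
  · rw [negate_neg, signed_mul_ne_signed_mul_iff (by positivity) (by positivity)]
    by_cases hcuv : c u = c v
    · right
      rw [hcuv, ← switch_neg_of_ends h]
      exact hs (c v) e u v h hcuv rfl
    · left
      rw [Fin.ext_iff] at hcuv
      omega

theorem colorableB_of_zeroFreeColorable_negate {k : ℕ} (hG : G.negate.ZeroFreeColorable k) :
    G.ColorableB k := by
  obtain ⟨ψ, hψ, hedge⟩ := hG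
  refine ⟨fun v => ⟨(|ψ v| - 1).toNat, by have := hψ v; omega⟩, fun i => ?_⟩
  refine balancedSet_iff_exists_switch.mpr ⟨fun v => decide (ψ v < 0),
    fun (e : G.E) u v (h : G.ends e = s(u, v)) hu hv => ?_⟩
  have huv : |ψ u| = |ψ v| := by
    have hcol : (|ψ u| - 1).toNat = (|ψ v| - 1).toNat := congrArg Fin.val (hu.trans hv.symm)
    have := (hψ u).1
    have := (hψ v).1
    omega
  have hne := hedge e u v h
  rw [negate_neg, eq_signed_mul_abs (ψ u), eq_signed_mul_abs (ψ v),
    signed_mul_ne_signed_mul_iff (by linarith [hψ u]) (by linarith [hψ v])] at hne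
  rw [switch_neg_of_ends h]
  exact hne.resolve_left (not_not.mpr huv)

end SGraph

theorem stmt4_general {V : Type} (G : SGraph V) (k : ℕ) :
    G.ColorableB k ↔ G.negate.ZeroFreeColorable k :=
  ⟨SGraph.ColorableB.zeroFreeColorable_negate, SGraph.colorableB_of_zeroFreeColorable_negate⟩

/-- `(G, σ)` with no positive loop admits a balanced `k`-coloring iff
`(G, -σ)` admits a 0-free `k`-coloring. -/
theorem stmt4 {V : Type} (G : SGraph V) (k : ℕ) (hpl : ¬ G.HasPosLoop) :
    G.ColorableB k ↔ G.negate.ZeroFreeColorable k :=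
  stmt4_general G k
end

section
/- For every t, OM(t) ≤ M(t) ≤ OM(2t), where M(t) is the largest k such that every graph of chromatic number at least t has a K_k-minor, and OM(t) is the largest k such that for every graph G with χ(G) ≥ t, the all-negative signed graph (G, -) has a (K_k, -)-minor. -/
open SGraph

/-- `M(t)`: the largest `k` such that every graph of chromatic number at least `t`
has a `K_k`-minor. -/
noncomputable def M (t : ℕ) : ℕ :=
  sSup {k : ℕ | ∀ (m : ℕ) (G : SimpleGraph (Fin m)),
    (t : ℕ∞) ≤ G.chromaticNumber → G.HasCliqueMinor k}

/-- `OM(t)`: the largest `k` such that for every graph `G` with `χ(G) ≥ t`, the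
all-negative signed graph `(G, -)` has a `(K_k, -)`-minor. -/
noncomputable def OM (t : ℕ) : ℕ :=
  sSup {k : ℕ | ∀ (m : ℕ) (G : SimpleGraph (Fin m)),
    (t : ℕ∞) ≤ G.chromaticNumber → (allNegK k).IsMinor G.allNeg}

lemma Finset.card_image_ite_add_one {V ι : Type*} [Fintype V] [DecidableEq ι] {P : V → ι}
    {a b : V} (hab : P a ≠ P b) :
    (Finset.univ.image fun v => if P v = P b then P a else P v).card + 1
      = (Finset.univ.image P).card := by
  have himage : (Finset.univ.image fun v => if P v = P b then P a else P v)
      = (Finset.univ.image P).erase (P b) := by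
    ext i
    simp only [Finset.mem_image, Finset.mem_univ, true_and, Finset.mem_erase]
    constructor
    · rintro ⟨v, rfl⟩
      by_cases hv : P v = P b <;> simp [hv, hab]
    · rintro ⟨hi, v, rfl⟩
      exact ⟨v, if_neg hi⟩
  rw [himage, Finset.card_erase_add_one (Finset.mem_image_of_mem P (Finset.mem_univ b))]

lemma Function.exists_surjective_fin_eq_iff {V ι : Type*} [Finite V] (P : V → ι) :
    ∃ (m : ℕ) (Q : V → Fin m), Function.Surjective Q ∧ ∀ u v, Q u = Q v ↔ P u = P v :=
  ⟨_, Finite.equivFin (Set.range P) ∘ Set.rangeFactorization P,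
    (Finite.equivFin _).surjective.comp Set.rangeFactorization_surjective,
    fun _ _ => (Finite.equivFin _).apply_eq_iff_eq.trans Subtype.ext_iff⟩

namespace SimpleGraph

section

variable {V W ι κ : Type*} {G : SimpleGraph V} {P : V → ι} {c : V → Bool}

/-- After switching `(G, -)` at `c`, these are exactly the positive edges. -/
def bichromatic (G : SimpleGraph V) (c : V → Bool) : SimpleGraph V where
  Adj u v := G.Adj u v ∧ c u ≠ c v
  symm := ⟨fun _ _ h => ⟨h.1.symm, h.2.symm⟩⟩
  loopless := ⟨fun _ h => h.2 rfl⟩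

lemma induce_bichromatic_eq {S : Set V}
    (hc : ∀ u ∈ S, ∀ v ∈ S, G.Adj u v → c u ≠ c v) :
    (G.bichromatic c).induce S = G.induce S := by
  ext u v
  exact ⟨And.left, fun h => ⟨h, hc u u.2 v v.2 h⟩⟩

lemma colorable_mul_two_of_map {Q : V → W}
    (hc : ∀ u v, G.Adj u v → Q u = Q v → c u ≠ c v) {n : ℕ} (h : (G.map Q).Colorable n) :
    G.Colorable (n * 2) := by
  obtain ⟨C⟩ := h
  have hG : G.Colorable (Fintype.card (Fin n × Bool)) := by
    refine (Coloring.mk (fun v => (C (Q v), c v)) fun {u v} huv heq => ?_).colorable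
    by_cases hQ : Q u = Q v
    · exact hc u v huv hQ (congrArg Prod.snd heq)
    · exact C.valid ⟨hQ, u, v, huv, rfl, rfl⟩ (congrArg Prod.fst heq)
  simpa using hG

lemma chromaticNumber_le_two_mul_map {Q : V → W}
    (hc : ∀ u v, G.Adj u v → Q u = Q v → c u ≠ c v) :
    G.chromaticNumber ≤ 2 * (G.map Q).chromaticNumber := by
  cases h : (G.map Q).chromaticNumber with
  | top => simp
  | coe n =>
    have hG := colorable_mul_two_of_map hc (chromaticNumber_le_iff_colorable.1 h.le)
    rw [mul_comm]
    exact_mod_cast hG.chromaticNumber_le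

lemma induce_preimage_connected {K : SimpleGraph V} {H : SimpleGraph W} {Q : V → W} {S : Set W}
    (hS : (H.induce S).Connected) (hfib : ∀ i ∈ S, (K.induce (Q ⁻¹' {i})).Connected)
    (hlift : ∀ i j, H.Adj i j → ∃ u v, K.Adj u v ∧ Q u = i ∧ Q v = j) :
    (K.induce (Q ⁻¹' S)).Connected := by
  have fiber_reachable : ∀ u v (hu : Q u ∈ S) (hv : Q v ∈ S), Q u = Q v →
      (K.induce (Q ⁻¹' S)).Reachable ⟨u, hu⟩ ⟨v, hv⟩ := by
    intro u v hu hv huv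
    have hsub : Q ⁻¹' {Q u} ⊆ Q ⁻¹' S := fun x (hx : Q x = Q u) =>
      show Q x ∈ S from hx ▸ hu
    exact ((hfib _ hu).preconnected ⟨u, rfl⟩ ⟨v, huv.symm⟩).map (induceHomOfLE K hsub).toHom
  obtain ⟨⟨i₀, hi₀⟩⟩ := hS.nonempty
  obtain ⟨⟨u₀, rfl⟩⟩ := (hfib i₀ hi₀).nonempty
  refine (connected_iff_exists_forall_reachable _).2 ⟨⟨u₀, hi₀⟩, ?_⟩
  suffices ∀ j, Relation.ReflTransGen (H.induce S).Adj ⟨Q u₀, hi₀⟩ j →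
      ∀ v (hv : Q v ∈ S), Q v = j.1 →
        (K.induce (Q ⁻¹' S)).Reachable ⟨u₀, hi₀⟩ ⟨v, hv⟩ from
    fun ⟨v, hv⟩ =>
      this ⟨Q v, hv⟩ ((reachable_iff_reflTransGen _ _).1 (hS.preconnected _ _)) v hv rfl
  intro j hj
  induction hj with
  | refl => exact fun v hv hQv => fiber_reachable u₀ v hi₀ hv hQv.symm
  | @tail i j _ hij ih =>
    intro v hv hQv
    obtain ⟨a, b, hab, ha, hb⟩ := hlift i j hij
    have haS : Q a ∈ S := ha ▸ i.2
    have hbS : Q b ∈ S := hb ▸ j.2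
    have hab' : (K.induce (Q ⁻¹' S)).Adj ⟨a, haS⟩ ⟨b, hbS⟩ := hab
    exact ((ih a haS ha).trans hab'.reachable).trans
      (fiber_reachable b v hbS hv (hb.trans hQv.symm))

structure IsBipartitePartition (G : SimpleGraph V) (P : V → ι) (c : V → Bool) : Prop where
  adj_ne : ∀ ⦃u v⦄, G.Adj u v → P u = P v → c u ≠ c v
  connected : ∀ v, (G.induce {x | P x = P v}).Connected

def MixedJoins (G : SimpleGraph V) (P : V → ι) (c : V → Bool) : Prop :=
  ∀ ⦃a b⦄, G.Adj a b → P a ≠ P b →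
    (∃ u v, G.Adj u v ∧ P u = P a ∧ P v = P b ∧ c u = c v) ∧
    (∃ u v, G.Adj u v ∧ P u = P a ∧ P v = P b ∧ c u ≠ c v)

lemma IsBipartitePartition.congr {Q : V → κ} (h : G.IsBipartitePartition P c)
    (hQ : ∀ u v, Q u = Q v ↔ P u = P v) : G.IsBipartitePartition Q c where
  adj_ne u v huv hQuv := h.adj_ne huv ((hQ u v).1 hQuv)
  connected v := by
    rw [show {x | Q x = Q v} = {x | P x = P v} from Set.ext fun x => hQ x v]
    exact h.connected v

lemma MixedJoins.congr {Q : V → κ} (h : G.MixedJoins P c)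
    (hQ : ∀ u v, Q u = Q v ↔ P u = P v) : G.MixedJoins Q c := by
  simpa only [MixedJoins, ne_eq, hQ] using h

lemma isBipartitePartition_id : G.IsBipartitePartition id fun _ => false where
  adj_ne _ _ huv h := absurd h huv.ne
  connected v := by simp [Set.ofPred_eq_eq_singleton]

lemma IsBipartitePartition.merge [DecidableEq ι] (h : G.IsBipartitePartition P c) {a b : V}
    (hab : G.Adj a b) (flip : Bool)
    (hflip : ∀ u v, G.Adj u v → P u = P a → P v = P b → c u ≠ xor (c v) flip) :
    G.IsBipartitePartition (fun v => if P v = P b then P a else P v)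
      (fun v => if P v = P b then xor (c v) flip else c v) := by
  refine ⟨fun u v huv hP => ?_, fun v => ?_⟩
  · by_cases hu : P u = P b <;> by_cases hv : P v = P b <;> simp only [hu, hv, if_true,
      if_false] at hP ⊢
    · simpa using h.adj_ne huv (hu.trans hv.symm)
    · exact (hflip v u huv.symm hP.symm hu).symm
    · exact hflip u v huv hP hv
    · exact h.adj_ne huv hP
  by_cases hv : P v = P a ∨ P v = P b
  · have hfib : {x | (if P x = P b then P a else P x) = if P v = P b then P a else P v}
        = {x | P x = P a} ∪ {x | P x = P b} := by
      ext x
      by_cases hx : P x = P b <;> rcases hv with hv | hv <;> by_cases hvb : P v = P b <;>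
        simp_all [eq_comm]
    rw [hfib]
    exact connected_induce_union (h.connected a).preconnected (h.connected b).preconnected
      rfl rfl hab
  · have hfib : {x | (if P x = P b then P a else P x) = if P v = P b then P a else P v}
        = {x | P x = P v} := by
      ext x
      by_cases hx : P x = P b <;> simp_all [eq_comm]
    rw [hfib]
    exact h.connected v

lemma exists_isBipartitePartition_mixedJoins [Fintype V] [DecidableEq V] :
    ∃ (P : V → V) (c : V → Bool), G.IsBipartitePartition P c ∧ G.MixedJoins P c := by
  obtain ⟨⟨P, c⟩, hPc, hmin⟩ :=
    (measure fun p : (V → V) × (V → Bool) => (Finset.univ.image p.1).card).wf.has_min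
      {p | G.IsBipartitePartition p.1 p.2} ⟨(id, fun _ => false), isBipartitePartition_id⟩
  have no_merge : ∀ {a b : V}, G.Adj a b → P a ≠ P b → ∀ flip : Bool,
      ¬ ∀ u v, G.Adj u v → P u = P a → P v = P b → c u ≠ xor (c v) flip :=
    fun hab hne flip hflip =>
    hmin (_, _) (hPc.merge hab flip hflip)
      ((Nat.lt_succ_self _).trans_eq (Finset.card_image_ite_add_one hne))
  refine ⟨P, c, hPc, fun a b hab hne => ⟨?_, ?_⟩⟩ <;> by_contra! hno
  · exact no_merge hab hne false (by simpa using hno)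
  · exact no_merge hab hne true fun u v huv hu hv => by simp [hno u v huv hu hv]

end

section

variable {V W : Type} {G : SimpleGraph V} {c : V → Bool}

lemma allNeg_switch_neg {e : (G.allNeg.switch c).E} {u v : V}
    (he : (G.allNeg.switch c).ends e = s(u, v)) : (G.allNeg.switch c).neg e = (c u == c v) := by
  change xor true (Sym2.lift _ (G.allNeg.ends e)) = _
  rw [show G.allNeg.ends e = s(u, v) from he, Sym2.lift_mk]
  dsimp only
  cases c u <;> cases c v <;> rfl

lemma adj_of_allNeg_switch_ends {e : (G.allNeg.switch c).E} {u v : V}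
    (he : (G.allNeg.switch c).ends e = s(u, v)) : G.Adj u v := by
  have h := (show G.edgeSet from e).2
  rwa [show (show G.edgeSet from e).1 = s(u, v) from he, mem_edgeSet] at h

lemma exists_walk_support_eq {u v : V} (p : (G.allNeg.switch c).Walk u v) :
    ∃ w : G.Walk u v, w.support = p.support := by
  induction p with
  | nil => exact ⟨.nil, rfl⟩
  | cons e he _ ih =>
    obtain ⟨w, hw⟩ := ih
    exact ⟨.cons (adj_of_allNeg_switch_ends he) w, by simp [SGraph.Walk.support, hw]⟩

lemma exists_posWalk_support_eq {u v : V} (w : (G.bichromatic c).Walk u v) :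
    ∃ p : (G.allNeg.switch c).Walk u v,
      p.support = w.support ∧ ∀ e ∈ p.edges, (G.allNeg.switch c).neg e = false := by
  induction w with
  | nil => exact ⟨.nil, rfl, by simp [SGraph.Walk.edges]⟩
  | @cons a b _ hab _ ih =>
    obtain ⟨p, hp, hneg⟩ := ih
    let e : (G.allNeg.switch c).E := ⟨s(a, b), hab.1⟩
    refine ⟨.cons e rfl p, by simp [SGraph.Walk.support, hp], ?_⟩
    simp only [SGraph.Walk.edges, List.mem_cons, forall_eq_or_imp]
    refine ⟨?_, hneg⟩
    rw [allNeg_switch_neg (e := e) rfl]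
    simpa using hab.2

lemma induce_connected_of_posConnected {B : Set V}
    (h : (G.allNeg.switch c).PosConnected B) : (G.induce B).Connected := by
  obtain ⟨⟨u, hu⟩, hwalk⟩ := h
  refine induce_connected_of_patches u hu fun {v} hv => ?_
  obtain ⟨p, hpB, -⟩ := hwalk u hu v hv
  obtain ⟨w, hw⟩ := exists_walk_support_eq p
  refine ⟨{x | x ∈ w.support}, fun x hx => hpB x (hw ▸ hx), w.start_mem_support,
    w.end_mem_support, (w.connected_induce_support).preconnected _ _⟩

lemma posConnected_of_induce_connected {B : Set V}
    (h : ((G.bichromatic c).induce B).Connected) : (G.allNeg.switch c).PosConnected B := by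
  obtain ⟨⟨u, hu⟩⟩ := h.nonempty
  refine ⟨⟨u, hu⟩, fun u hu v hv => ?_⟩
  obtain ⟨w⟩ := h.preconnected ⟨u, hu⟩ ⟨v, hv⟩
  obtain ⟨p, hp, hneg⟩ : ∃ p : (G.allNeg.switch c).Walk u v, p.support = _ ∧ _ :=
    exists_posWalk_support_eq (w.map (Embedding.induce B).toHom)
  refine ⟨p, fun x hx => ?_, hneg⟩
  rw [hp, Walk.support_map, List.mem_map] at hx
  obtain ⟨⟨y, hy⟩, -, rfl⟩ := hx
  exact hy

lemma hasCliqueMinor_of_isMinor_allNegK {k : ℕ} (h : (allNegK k).IsMinor G.allNeg) :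
    G.HasCliqueMinor k := by
  obtain ⟨c, B, hconn, hdisj, η, -, hη⟩ := h
  refine ⟨fun i => (⊤ : G.Subgraph).induce (B i), fun i => ?_, hdisj, fun i j hij => ?_⟩
  · rw [← induce_eq_coe_induce_top]
    exact induce_connected_of_posConnected (hconn i)
  · obtain ⟨-, u, v, he, hu, hv⟩ := hη ⟨s(i, j), hij⟩ i j rfl
    exact ⟨u, v, adj_of_allNeg_switch_ends (c := c) he, hu, hv⟩

theorem isMinor_allNeg_of_branchSets {H : SimpleGraph W} (c : V → Bool) (B : W → Set V)
    (hconn : ∀ x, ((G.bichromatic c).induce (B x)).Connected)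
    (hdisj : Pairwise fun x y => Disjoint (B x) (B y))
    (hcross : ∀ x y, H.Adj x y → ∃ u v, G.Adj u v ∧ u ∈ B x ∧ v ∈ B y ∧ c u = c v) :
    H.allNeg.IsMinor G.allNeg := by
  have mem_unique : ∀ {v x y}, v ∈ B x → v ∈ B y → x = y := fun hx hy =>
    by_contra fun hxy => Set.disjoint_left.1 (hdisj hxy) hx hy
  have hedge : ∀ e : H.edgeSet, ∃ f : G.edgeSet, ∀ x y, (e : Sym2 W) = s(x, y) →
      ∃ u v, (f : Sym2 V) = s(u, v) ∧ u ∈ B x ∧ v ∈ B y ∧ c u = c v := by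
    rintro ⟨e, he⟩
    induction e using Sym2.ind with | h a b => ?_
    obtain ⟨u, v, huv, hu, hv, hc⟩ := hcross a b he
    refine ⟨⟨s(u, v), huv⟩, fun x y hxy => ?_⟩
    rcases Sym2.eq_iff.1 hxy with ⟨rfl, rfl⟩ | ⟨rfl, rfl⟩
    exacts [⟨u, v, rfl, hu, hv, hc⟩, ⟨v, u, Sym2.eq_swap, hv, hu, hc.symm⟩]
  choose η hη using hedge
  refine ⟨c, B, fun x => posConnected_of_induce_connected (hconn x), hdisj, η, ?_, ?_⟩
  · rintro ⟨e₁, he₁⟩ ⟨e₂, he₂⟩ h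
    induction e₁ using Sym2.ind with | h x₁ y₁ => ?_
    induction e₂ using Sym2.ind with | h x₂ y₂ => ?_
    obtain ⟨u₁, v₁, hf₁, hu₁, hv₁, -⟩ := hη ⟨_, he₁⟩ x₁ y₁ rfl
    obtain ⟨u₂, v₂, hf₂, hu₂, hv₂, -⟩ := hη ⟨_, he₂⟩ x₂ y₂ rfl
    rw [h, hf₂] at hf₁
    refine Subtype.ext (show s(x₁, y₁) = s(x₂, y₂) from ?_)
    rcases Sym2.eq_iff.1 hf₁ with ⟨rfl, rfl⟩ | ⟨rfl, rfl⟩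
    · rw [mem_unique hu₁ hu₂, mem_unique hv₁ hv₂]
    · rw [mem_unique hu₁ hv₂, mem_unique hv₁ hu₂, Sym2.eq_swap]
  · intro e x y hxy
    obtain ⟨u, v, hf, hu, hv, hc⟩ := hη e x y hxy
    refine ⟨?_, u, v, hf, hu, hv⟩
    rw [allNeg_switch_neg (c := c) hf, hc, beq_self_eq_true]
    rfl

theorem isMinor_allNegK_of_map {k : ℕ} {Q : V → W} (hQ : Function.Surjective Q)
    (hP : G.IsBipartitePartition Q c) (hmix : G.MixedJoins Q c)
    (h : (G.map Q).HasCliqueMinor k) : (allNegK k).IsMinor G.allNeg := by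
  obtain ⟨T, hTconn, hTdisj, hTcross⟩ := h
  refine isMinor_allNeg_of_branchSets c (fun x => Q ⁻¹' (T x).verts) (fun x => ?_)
    (fun x y hxy => (hTdisj hxy).preimage Q) (fun x y hxy => ?_)
  · refine induce_preimage_connected (Subgraph.Connected.induce_verts ⟨hTconn x⟩)
      (fun i _ => ?_) (fun i j hij => ?_)
    · obtain ⟨v, rfl⟩ := hQ i
      rw [induce_bichromatic_eq (S := Q ⁻¹' {Q v})
        fun u (hu : Q u = Q v) w (hw : Q w = Q v) huw => hP.adj_ne huw (hu.trans hw.symm)]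
      exact hP.connected v
    · obtain ⟨hne, a, b, hab, rfl, rfl⟩ := hij
      obtain ⟨u, v, huv, hu, hv, hc⟩ := (hmix hab hne).2
      exact ⟨u, v, ⟨huv, hc⟩, hu, hv⟩
  · obtain ⟨i, j, ⟨hne, a, b, hab, rfl, rfl⟩, hi, hj⟩ := hTcross x y hxy
    obtain ⟨u, v, huv, hu, hv, hc⟩ := (hmix hab hne).1
    exact ⟨u, v, huv, show Q u ∈ _ from hu ▸ hi, show Q v ∈ _ from hv ▸ hj, hc⟩

theorem isMinor_allNegK_of_forall_hasCliqueMinor [Fintype V] {t k : ℕ}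
    (hk : ∀ (m : ℕ) (H : SimpleGraph (Fin m)),
      (t : ℕ∞) ≤ H.chromaticNumber → H.HasCliqueMinor k)
    (hG : ((2 * t : ℕ) : ℕ∞) ≤ G.chromaticNumber) : (allNegK k).IsMinor G.allNeg := by
  classical
  obtain ⟨P, c, hP, hmix⟩ := G.exists_isBipartitePartition_mixedJoins
  obtain ⟨m, Q, hQ, hPQ⟩ := Function.exists_surjective_fin_eq_iff P
  refine isMinor_allNegK_of_map hQ (hP.congr hPQ) (hmix.congr hPQ) (hk m _ ?_)
  have h2 := hG.trans (chromaticNumber_le_two_mul_map (hP.congr hPQ).adj_ne)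
  push_cast at h2
  exact (ENat.mul_le_mul_left_iff two_ne_zero (by decide)).1 h2

lemma HasCliqueMinor.le_card [Fintype V] {k : ℕ} (h : G.HasCliqueMinor k) :
    k ≤ Fintype.card V := by
  obtain ⟨T, hconn, hdisj, -⟩ := h
  let f i : (T i).verts := (hconn i).nonempty.some
  simpa using Fintype.card_le_of_injective (fun i => (f i : V)) fun i j hij =>
    by_contra fun hne => Set.disjoint_left.1 (hdisj hne) (f i).2
      ((show (f i : V) = f j from hij) ▸ (f j).2)

lemma hasCliqueMinor_zero : G.HasCliqueMinor 0 :=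
  ⟨Fin.elim0, fun i => i.elim0, fun i => i.elim0, fun i => i.elim0⟩

lemma isMinor_allNegK_zero : (allNegK 0).IsMinor G.allNeg :=
  isMinor_allNeg_of_branchSets (fun _ => false) Fin.elim0 (fun i => i.elim0) (fun i => i.elim0)
    fun i => i.elim0

lemma bddAbove_setOf_forall_hasCliqueMinor (t : ℕ) :
    BddAbove {k : ℕ | ∀ (m : ℕ) (G : SimpleGraph (Fin m)),
      (t : ℕ∞) ≤ G.chromaticNumber → G.HasCliqueMinor k} :=
  ⟨t, fun k hk => by simpa using (hk t ⊤ (by simp [chromaticNumber_top])).le_card⟩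

lemma setOf_forall_isMinor_allNegK_subset (t : ℕ) :
    {k : ℕ | ∀ (m : ℕ) (G : SimpleGraph (Fin m)),
      (t : ℕ∞) ≤ G.chromaticNumber → (allNegK k).IsMinor G.allNeg} ⊆
    {k : ℕ | ∀ (m : ℕ) (G : SimpleGraph (Fin m)),
      (t : ℕ∞) ≤ G.chromaticNumber → G.HasCliqueMinor k} :=
  fun _ hk m G hG => hasCliqueMinor_of_isMinor_allNegK (hk m G hG)

end

end SimpleGraph

/-- `OM(t) ≤ M(t) ≤ OM(2t)` for every `t`. -/
theorem stmt10 (t : ℕ) : OM t ≤ M t ∧ M t ≤ OM (2 * t) := by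
  constructor
  · exact csSup_le_csSup (SimpleGraph.bddAbove_setOf_forall_hasCliqueMinor t)
      ⟨0, fun _ _ _ => SimpleGraph.isMinor_allNegK_zero⟩
      (SimpleGraph.setOf_forall_isMinor_allNegK_subset t)
  · exact csSup_le_csSup
      ((SimpleGraph.bddAbove_setOf_forall_hasCliqueMinor _).mono
        (SimpleGraph.setOf_forall_isMinor_allNegK_subset _))
      ⟨0, fun _ _ _ => SimpleGraph.hasCliqueMinor_zero⟩
      fun _ hk _ _ hG => SimpleGraph.isMinor_allNegK_of_forall_hasCliqueMinor hk hG
end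

section
/- K̃_k is a minor of G̃ if and only if K_k is a minor of G. -/
open SGraph

/-!
A `K_k`-minor of `G` and a `K̃_k`-minor of `G̃` can use the same branch sets: a walk of
positive edges of `G̃` is a walk of `G`, and conversely every edge of `G` occurs in `G̃` with
both signs, so each edge of `G` joining two branch sets supplies both the positive and the
negative edge of `K̃_k` between them.
-/

lemma SGraph.Walk.start_mem_support_s11 {V : Type} {G : SGraph V} :
    ∀ {u v : V} (p : G.Walk u v), u ∈ p.support
  | _, _, .nil => List.mem_singleton_self _
  | _, _, .cons .. => List.mem_cons_self

lemma Pairwise.eq_of_mem_of_mem {ι α : Type*} {B : ι → Set α}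
    (hB : Pairwise fun i j => Disjoint (B i) (B j)) {i j : ι} {x : α}
    (hi : x ∈ B i) (hj : x ∈ B j) : i = j := by
  by_contra hne
  exact Set.disjoint_left.mp (hB hne) hi hj

lemma Sym2.eq_of_mem_of_pairwise_disjoint {ι α : Type*} {B : ι → Set α}
    (hB : Pairwise fun i j => Disjoint (B i) (B j)) {i j i' j' : ι} {u v u' v' : α}
    (hu : u ∈ B i) (hv : v ∈ B j) (hu' : u' ∈ B i') (hv' : v' ∈ B j')
    (h : s(u, v) = s(u', v')) : s(i, j) = s(i', j') := by
  rcases Sym2.eq_iff.mp h with ⟨rfl, rfl⟩ | ⟨rfl, rfl⟩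
  · rw [hB.eq_of_mem_of_mem hu hu', hB.eq_of_mem_of_mem hv hv']
  · rw [hB.eq_of_mem_of_mem hu hv', hB.eq_of_mem_of_mem hv hu', Sym2.eq_swap]

namespace SimpleGraph

variable {V : Type} {G : SimpleGraph V}

lemma reachable_induce_of_sgraphWalk {H : SGraph V}
    (hH : ∀ e u v, H.ends e = s(u, v) → G.Adj u v) {B : Set V} :
    ∀ {u v : V} (p : H.Walk u v), (∀ x ∈ p.support, x ∈ B) → ∀ (hu : u ∈ B) (hv : v ∈ B),
      ((⊤ : G.Subgraph).induce B).coe.Reachable ⟨u, hu⟩ ⟨v, hv⟩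
  | _, _, .nil, _, _, _ => .refl _
  | u, _, .cons (v := w) e he q, hp, hu, hv => by
    have hw : w ∈ B := hp w (List.mem_cons_of_mem u q.start_mem_support_s11)
    have hstep : ((⊤ : G.Subgraph).induce B).coe.Adj ⟨u, hu⟩ ⟨w, hw⟩ := by
      simpa [hu, hw] using hH e u w he
    exact hstep.reachable.trans <|
      reachable_induce_of_sgraphWalk hH q (fun x hx => hp x (List.mem_cons_of_mem u hx)) hw hv

lemma exists_posWalk_tildeS_switch (s : V → Bool) {T : G.Subgraph} {a b : T.verts}
    (p : T.coe.Walk a b) :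
    ∃ q : (G.tildeS.switch s).Walk a b,
      (∀ x ∈ q.support, x ∈ T.verts) ∧ ∀ e ∈ q.edges, (G.tildeS.switch s).neg e = false := by
  induction p with
  | nil => exact ⟨.nil, by simp [SGraph.Walk.support], by simp [SGraph.Walk.edges]⟩
  | @cons a c b h p ih =>
    obtain ⟨q, hq, hqpos⟩ := ih
    refine ⟨.cons (⟨⟨s(a, c), T.adj_sub h⟩, xor (s a) (s c)⟩ : G.edgeSet × Bool) rfl q, ?_, ?_⟩
    · simpa [SGraph.Walk.support] using hq
    · intro e he
      rcases List.mem_cons.mp he with rfl | he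
      · simp [SGraph.switch, SimpleGraph.tildeS]
      · exact hqpos e he

lemma adj_of_tildeS_ends {e : G.tildeS.E} {u v : V} (he : G.tildeS.ends e = s(u, v)) :
    G.Adj u v :=
  G.mem_edgeSet.mp (he ▸ e.1.2)

theorem hasCliqueMinor_of_tildeK_isMinor {k : ℕ} (h : (tildeK k).IsMinor G.tildeS) :
    G.HasCliqueMinor k := by
  obtain ⟨s, B, hconn, hdisj, η, -, hη⟩ := h
  refine ⟨fun i => (⊤ : G.Subgraph).induce (B i), fun i => ?_, hdisj, fun i j hij => ?_⟩
  · obtain ⟨⟨x, hx⟩, hwalk⟩ := hconn i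
    refine (connected_iff _).mpr ⟨?_, ⟨⟨x, hx⟩⟩⟩
    rintro ⟨a, ha⟩ ⟨b, hb⟩
    obtain ⟨p, hp, -⟩ := hwalk a ha b hb
    exact reachable_induce_of_sgraphWalk (H := G.tildeS.switch s)
      (fun _ _ _ => adj_of_tildeS_ends) p hp ha hb
  · obtain ⟨-, u, v, huv, hu, hv⟩ :=
      hη (⟨⟨s(i, j), by simpa using hij⟩, false⟩ : (tildeK k).E) i j rfl
    exact ⟨u, v, adj_of_tildeS_ends huv, hu, hv⟩

theorem tildeK_isMinor_of_hasCliqueMinor {k : ℕ} (h : G.HasCliqueMinor k) :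
    (tildeK k).IsMinor G.tildeS := by
  obtain ⟨T, hconn, hdisj, hedge⟩ := h
  have hbranch : ∀ e : (tildeK k).E, ∃ (i j : Fin k) (u v : V),
      (tildeK k).ends e = s(i, j) ∧ G.Adj u v ∧ u ∈ (T i).verts ∧ v ∈ (T j).verts := by
    rintro ⟨⟨z, hz⟩, -⟩
    induction z using Sym2.ind with
    | _ i j =>
      obtain ⟨u, v, huv, hu, hv⟩ := hedge i j (by simpa using hz)
      exact ⟨i, j, u, v, rfl, huv, hu, hv⟩
  choose i j u v hends huv hu hv using hbranch
  refine ⟨fun _ => false, fun i => (T i).verts, fun i => ⟨?_, ?_⟩, hdisj,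
    fun e => (⟨⟨s(u e, v e), huv e⟩, e.2⟩ : G.edgeSet × Bool), ?_, ?_⟩
  · obtain ⟨x⟩ := (hconn i).nonempty
    exact ⟨x, x.2⟩
  · intro a ha b hb
    obtain ⟨p⟩ := (hconn i).preconnected ⟨a, ha⟩ ⟨b, hb⟩
    exact exists_posWalk_tildeS_switch _ p
  · intro e e' hee'
    obtain ⟨hsame_edge, hsame_sign⟩ := Prod.ext_iff.mp hee'
    have hij := Sym2.eq_of_mem_of_pairwise_disjoint hdisj (hu e) (hv e) (hu e') (hv e')
      (Subtype.ext_iff.mp hsame_edge)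
    exact Prod.ext (Subtype.ext ((hends e).trans (hij.trans (hends e').symm))) hsame_sign
  · intro e x y hxy
    refine ⟨by simp [SGraph.switch, SimpleGraph.tildeS, tildeK], ?_⟩
    rcases Sym2.eq_iff.mp (hxy.symm.trans (hends e)) with ⟨rfl, rfl⟩ | ⟨rfl, rfl⟩
    · exact ⟨u e, v e, rfl, hu e, hv e⟩
    · exact ⟨v e, u e, Sym2.eq_swap, hv e, hu e⟩

end SimpleGraph

/-- `K̃_k` is a minor of `G̃` iff `K_k` is a minor of `G`. -/
theorem stmt11 {V : Type} (G : SimpleGraph V) (k : ℕ) :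
    (tildeK k).IsMinor G.tildeS ↔ G.HasCliqueMinor k :=
  ⟨SimpleGraph.hasCliqueMinor_of_tildeK_isMinor, SimpleGraph.tildeK_isMinor_of_hasCliqueMinor⟩
end
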